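/- There exist an infinite-dimensional separable complex Hilbert space H and an invertible bounded linear operator T : H → H (a continuous linear equivalence) such that T is Li-Yorke chaotic but its inverse T⁻¹ is not Li-Yorke chaotic. -/

import Mathlib

/-- `{x, y}` is a Li-Yorke chaotic pair for `T` if the distances between the iterates
`Tⁿ x` and `Tⁿ y` have positive limsup and zero liminf. -/
def LiYorkePair {X : Type*} [PseudoEMetricSpace X] (T : X → X) (x y : X) : Prop :=
  0 < Filter.limsup (fun n : ℕ => edist (T^[n] x) (T^[n] y)) Filter.atTop ∧
    Filter.liminf (fun n : ℕ => edist (T^[n] x) (T^[n] y)) Filter.atTop = 0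

/-- `T` is Li-Yorke chaotic if there is an uncountable set all of whose pairs of distinct
points are Li-Yorke chaotic pairs for `T`. -/
def LiYorkeChaotic {X : Type*} [PseudoEMetricSpace X] (T : X → X) : Prop :=
  ∃ Γ : Set X, ¬ Γ.Countable ∧ ∀ x ∈ Γ, ∀ y ∈ Γ, x ≠ y → LiYorkePair T x y

/-! On `ℓ²(ℤ)` take the bilateral weighted shift `T e_k = (b_(k+1) / b_k) e_(k+1)` with
`b = exp (-d)`, where `d` is the distance to the set of nonpositive integers and perfect squares.
Since `d` is `1`-Lipschitz, all weights lie in `[e⁻¹, e]`, so `T` is a bounded invertible operator.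
The forward orbit of `e₀` has `‖Tⁿ e₀‖ = b_n`, which equals `1` at the squares and is at most
`e^(-j)` at `j² + j`; hence the real multiples of `e₀` form an uncountable scrambled set.
Backwards, `(T⁻ⁿ v)_(m-n) = (b_(m-n) / b_m) v_m` and `b = 1 ≥ b_m` on the nonpositive integers,
so `‖T⁻ⁿ v‖ ≥ |v_m|` for large `n`: no pair of points is Li-Yorke for `T⁻¹`. -/

open Filter Topology
open scoped ENNReal NNReal lp

theorem LiYorkeChaotic.exists_liYorkePair {X : Type*} [PseudoEMetricSpace X] {T : X → X}
    (hT : LiYorkeChaotic T) : ∃ x y, LiYorkePair T x y := by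
  obtain ⟨Γ, hΓ, hpair⟩ := hT
  obtain ⟨x, hx, y, hy, hxy⟩ := Set.not_subsingleton_iff.1 fun h => hΓ h.countable
  exact ⟨x, y, hpair x hx y hy hxy⟩

section LinearDynamics

variable {R E : Type*} [Ring R] [SeminormedAddCommGroup E] [Module R E]

theorem LinearMap.edist_iterate (T : E →ₗ[R] E) (n : ℕ) (x y : E) :
    edist (T^[n] x) (T^[n] y) = ‖T^[n] (x - y)‖ₑ := by
  rw [edist_eq_enorm_sub, ← Module.End.coe_pow, map_sub]

theorem LinearMap.not_liYorkeChaotic_of_liminf_ne_zero (T : E →ₗ[R] E)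
    (hT : ∀ v ≠ 0, liminf (fun n => ‖T^[n] v‖ₑ) atTop ≠ 0) : ¬ LiYorkeChaotic T := by
  intro hchaos
  obtain ⟨x, y, hsup, hinf⟩ := hchaos.exists_liYorkePair
  by_cases hxy : x = y
  · simp [hxy] at hsup
  · exact hT (x - y) (sub_ne_zero.2 hxy) (by simpa only [T.edist_iterate] using hinf)

theorem LinearMap.liYorkeChaotic_of_limsup_pos_of_liminf_eq_zero [NormedSpace ℝ E]
    (T : E →ₗ[ℝ] E) (x : E) (hsup : 0 < limsup (fun n => ‖T^[n] x‖ₑ) atTop)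
    (hinf : liminf (fun n => ‖T^[n] x‖ₑ) atTop = 0) : LiYorkeChaotic T := by
  have hx : x ≠ 0 := by
    rintro rfl
    simp [enorm_eq_nnnorm] at hsup
  refine ⟨Set.range (· • x : ℝ → E), fun h => ?_, ?_⟩
  · exact Cardinal.not_countable_real (by simpa using h.preimage (smul_left_injective ℝ hx))
  · rintro _ ⟨a, rfl⟩ _ ⟨b, rfl⟩ hab
    have hdist (n : ℕ) : edist (T^[n] (a • x)) (T^[n] (b • x)) = ‖a - b‖ₑ * ‖T^[n] x‖ₑ := by
      rw [T.edist_iterate, ← sub_smul, ← Module.End.coe_pow, map_smul, enorm_smul]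
    simp only [LiYorkePair, hdist, ENNReal.limsup_const_mul_of_ne_top enorm_ne_top,
      ENNReal.liminf_const_mul_of_ne_top enorm_ne_top, hinf, mul_zero, and_true]
    exact ENNReal.mul_pos (enorm_ne_zero.2 (sub_ne_zero.2 fun h => hab (by rw [h]))) hsup.ne'

end LinearDynamics

section HilbertBasis

variable {ι 𝕜 E : Type*} [RCLike 𝕜] [NormedAddCommGroup E] [InnerProductSpace 𝕜 E]

theorem HilbertBasis.separableSpace [Countable ι] (b : HilbertBasis ι 𝕜 E) :
    TopologicalSpace.SeparableSpace E := by
  refine TopologicalSpace.isSeparable_univ_iff.1 ?_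
  rw [← Submodule.top_coe (R := 𝕜), ← b.dense_span, Submodule.topologicalClosure_coe]
  exact (Set.countable_range b).isSeparable.span.closure

theorem HilbertBasis.not_finiteDimensional [Infinite ι] (b : HilbertBasis ι 𝕜 E) :
    ¬ FiniteDimensional 𝕜 E := fun _ =>
  have := b.orthonormal.linearIndependent.finite
  not_finite ι

end HilbertBasis

noncomputable section

section Reindex

variable {α β 𝕜 E : Type*} [NormedField 𝕜] [NormedAddCommGroup E] [NormedSpace 𝕜 E] {p : ℝ≥0∞}

theorem Memℓp.comp_equiv {f : β → E} (hf : Memℓp f p) (e : α ≃ β) : Memℓp (f ∘ e) p := by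
  rcases p.trichotomy with rfl | rfl | hp
  · rw [memℓp_zero_iff] at hf ⊢
    exact hf.preimage e.injective.injOn
  · rw [memℓp_infty_iff] at hf ⊢
    simpa only [Function.comp_def] using (e.surjective.range_comp fun j => ‖f j‖) ▸ hf
  · rw [memℓp_gen_iff hp] at hf ⊢
    exact (e.summable_iff (f := fun j => ‖f j‖ ^ p.toReal)).2 hf

theorem Memℓp.smul_of_norm_le {c : α → 𝕜} {C : ℝ} (hc : ∀ i, ‖c i‖ ≤ C) {f : α → E}
    (hf : Memℓp f p) : Memℓp (fun i => c i • f i) p :=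
  (hf.norm.const_mul C).mono fun i => by
    rw [norm_smul]
    exact mul_le_mul_of_nonneg_right (hc i) (norm_nonneg _)

namespace lp

variable [Fact (1 ≤ p)]

theorem norm_eq_of_comp_equiv (e : α ≃ β) {x : lp (fun _ : β => E) p}
    {y : lp (fun _ : α => E) p} (hy : ⇑y = x ∘ e) : ‖y‖ = ‖x‖ := by
  rcases p.dichotomy with rfl | hp
  · simp only [lp.norm_eq_ciSup, hy, Function.comp_apply, e.iSup_comp (g := fun j => ‖x j‖)]
  · have hp' : 0 < p.toReal := by linarith
    rw [lp.norm_eq_tsum_rpow hp', lp.norm_eq_tsum_rpow hp', hy]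
    simp only [Function.comp_apply]
    rw [e.tsum_eq fun j => ‖x j‖ ^ p.toReal]

variable (𝕜 E p) in
def compEquiv (e : α ≃ β) : lp (fun _ : β => E) p ≃ₗᵢ[𝕜] lp (fun _ : α => E) p where
  toFun x := ⟨x ∘ e, (lp.memℓp x).comp_equiv e⟩
  invFun x := ⟨x ∘ e.symm, (lp.memℓp x).comp_equiv e.symm⟩
  map_add' _ _ := rfl
  map_smul' _ _ := rfl
  left_inv x := by ext j; simp
  right_inv x := by ext i; simp
  norm_map' x := norm_eq_of_comp_equiv e rfl

theorem norm_le_of_apply_eq_smul {c : α → 𝕜} {C : ℝ≥0} (hc : ∀ i, ‖c i‖ ≤ C)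
    {x y : lp (fun _ : α => E) p} (hy : ∀ i, y i = c i • x i) : ‖y‖ ≤ C * ‖x‖ := by
  have hp : p ≠ 0 := (zero_lt_one.trans_le Fact.out).ne'
  calc ‖y‖ ≤ ‖(C : ℝ) • toNorm x‖ := lp.norm_mono hp fun i => by
        simpa [hy, norm_smul, toNorm] using mul_le_mul_of_nonneg_right (hc i) (norm_nonneg (x i))
    _ = C * ‖x‖ := by rw [lp.norm_const_smul hp, norm_toNorm, NNReal.norm_eq]

variable (E p) in
def smulCLM (c : α → 𝕜) (C : ℝ≥0) (hc : ∀ i, ‖c i‖ ≤ C) :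
    lp (fun _ : α => E) p →L[𝕜] lp (fun _ : α => E) p :=
  LinearMap.mkContinuous
    { toFun x := ⟨fun i => c i • x i, (lp.memℓp x).smul_of_norm_le hc⟩
      map_add' x y := by ext i; exact smul_add (c i) (x i) (y i)
      map_smul' a x := by ext i; simp [smul_comm (c i) a] }
    C fun _ => norm_le_of_apply_eq_smul hc fun _ => rfl

theorem smulCLM_apply (c : α → 𝕜) (C : ℝ≥0) (hc : ∀ i, ‖c i‖ ≤ C)
    (x : lp (fun _ : α => E) p) (i : α) : smulCLM E p c C hc x i = c i • x i := rfl

variable (E p) in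
def unitsSMulCLE (c : α → 𝕜ˣ) (C : ℝ≥0) (hc : ∀ i, ‖(c i : 𝕜)‖ ≤ C)
    (hc' : ∀ i, ‖(↑(c i)⁻¹ : 𝕜)‖ ≤ C) : lp (fun _ : α => E) p ≃L[𝕜] lp (fun _ : α => E) p :=
  .equivOfInverse (smulCLM E p (fun i => c i) C hc) (smulCLM E p (fun i => ↑(c i)⁻¹) C hc')
    (fun x => by ext i; simp [smulCLM_apply, smul_smul])
    (fun x => by ext i; simp [smulCLM_apply, smul_smul])

end lp

end Reindex

theorem LipschitzWith.abs_apply_pred_sub_le {d : ℤ → ℝ} {K : ℝ≥0} (hd : LipschitzWith K d)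
    (k : ℤ) : |d (k - 1) - d k| ≤ K := by
  simpa [Real.dist_eq, Int.dist_eq] using hd.dist_le_mul (k - 1) k

section WeightedShift

variable {𝕜 E : Type*} [RCLike 𝕜] [NormedAddCommGroup E] [NormedSpace 𝕜 E] {p : ℝ≥0∞}
  [Fact (1 ≤ p)]

variable (E p) in
def weightedShift (d : ℤ → ℝ) (K : ℝ≥0) (hd : LipschitzWith K d) :
    lp (fun _ : ℤ => E) p ≃L[𝕜] lp (fun _ : ℤ => E) p :=
  (lp.compEquiv 𝕜 E p (Equiv.subRight 1)).toContinuousLinearEquiv.trans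
    (lp.unitsSMulCLE E p (fun k => Units.mk0 (Real.exp (d (k - 1) - d k) : 𝕜)
        (by exact_mod_cast (Real.exp_pos _).ne')) ⟨Real.exp K, (Real.exp_pos K).le⟩
      (fun k => by
        rw [Units.val_mk0, RCLike.norm_ofReal, abs_of_pos (Real.exp_pos _)]
        exact Real.exp_le_exp.2 (le_of_abs_le (hd.abs_apply_pred_sub_le k)))
      (fun k => by
        rw [Units.val_inv_eq_inv_val, Units.val_mk0, norm_inv, RCLike.norm_ofReal,
          abs_of_pos (Real.exp_pos _), ← Real.exp_neg]
        exact Real.exp_le_exp.2 (neg_le.1 (abs_le.1 (hd.abs_apply_pred_sub_le k)).1)))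

variable (d : ℤ → ℝ) (K : ℝ≥0) (hd : LipschitzWith K d)

theorem weightedShift_apply (x : lp (fun _ : ℤ => E) p) (k : ℤ) :
    weightedShift (𝕜 := 𝕜) E p d K hd x k = (Real.exp (d (k - 1) - d k) : 𝕜) • x (k - 1) :=
  rfl

theorem weightedShift_symm_apply (x : lp (fun _ : ℤ => E) p) (k : ℤ) :
    (weightedShift (𝕜 := 𝕜) E p d K hd).symm x k =
      (Real.exp (d (k + 1) - d k) : 𝕜) • x (k + 1) := by
  change (↑(Units.mk0 (Real.exp (d (k + 1 - 1) - d (k + 1)) : 𝕜) _)⁻¹ : 𝕜) • x (k + 1) = _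
  simp only [Units.val_inv_eq_inv_val, Units.val_mk0, add_sub_cancel_right]
  rw [← RCLike.ofReal_inv, ← Real.exp_neg, neg_sub]

theorem weightedShift_iterate_apply (n : ℕ) (x : lp (fun _ : ℤ => E) p) (k : ℤ) :
    (weightedShift (𝕜 := 𝕜) E p d K hd)^[n] x k =
      (Real.exp (d (k - n) - d k) : 𝕜) • x (k - n) := by
  induction n generalizing k with
  | zero => simp
  | succ n ih =>
    rw [Function.iterate_succ_apply', weightedShift_apply, ih, smul_smul, ← RCLike.ofReal_mul,
      ← Real.exp_add, show k - 1 - (n : ℤ) = k - (n + 1 : ℕ) by push_cast; ring]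
    congr 3
    ring

theorem weightedShift_symm_iterate_apply (n : ℕ) (x : lp (fun _ : ℤ => E) p) (k : ℤ) :
    (weightedShift (𝕜 := 𝕜) E p d K hd).symm^[n] x k =
      (Real.exp (d (k + n) - d k) : 𝕜) • x (k + n) := by
  induction n generalizing k with
  | zero => simp
  | succ n ih =>
    rw [Function.iterate_succ_apply', weightedShift_symm_apply, ih, smul_smul,
      ← RCLike.ofReal_mul, ← Real.exp_add,
      show k + 1 + (n : ℤ) = k + (n + 1 : ℕ) by push_cast; ring]
    congr 3
    ring

theorem weightedShift_iterate_single (n : ℕ) (a : E) :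
    (weightedShift (𝕜 := 𝕜) E p d K hd)^[n] (lp.single p 0 a) =
      lp.single p (n : ℤ) ((Real.exp (d 0 - d n) : 𝕜) • a) := by
  ext k
  rw [weightedShift_iterate_apply, lp.single_apply, lp.single_apply]
  by_cases hk : k = n
  · subst hk
    simp
  · simp [hk, sub_eq_zero]

theorem norm_weightedShift_iterate_single (n : ℕ) (a : E) :
    ‖(weightedShift (𝕜 := 𝕜) E p d K hd)^[n] (lp.single p 0 a)‖ =
      Real.exp (d 0 - d n) * ‖a‖ := by
  rw [weightedShift_iterate_single, lp.norm_single (zero_lt_one.trans_le Fact.out), norm_smul,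
    RCLike.norm_ofReal, abs_of_pos (Real.exp_pos _)]

theorem exp_mul_norm_apply_le_norm_weightedShift_symm_iterate (n : ℕ)
    (v : lp (fun _ : ℤ => E) p) (m : ℤ) :
    Real.exp (d m - d (m - n)) * ‖v m‖ ≤ ‖(weightedShift (𝕜 := 𝕜) E p d K hd).symm^[n] v‖ := by
  have h := lp.norm_apply_le_norm (zero_lt_one.trans_le Fact.out).ne'
    ((weightedShift (𝕜 := 𝕜) E p d K hd).symm^[n] v) (m - n)
  rwa [weightedShift_symm_iterate_apply, sub_add_cancel, norm_smul, RCLike.norm_ofReal,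
    abs_of_pos (Real.exp_pos _)] at h

end WeightedShift

def distNonposOrSquare (k : ℤ) : ℝ :=
  Metric.infDist k (Set.Iic 0 ∪ Set.range fun j : ℕ => (j : ℤ) ^ 2)

theorem lipschitzWith_distNonposOrSquare : LipschitzWith 1 distNonposOrSquare :=
  Metric.lipschitz_infDist_pt _

theorem distNonposOrSquare_nonneg (k : ℤ) : 0 ≤ distNonposOrSquare k :=
  Metric.infDist_nonneg

theorem distNonposOrSquare_of_nonpos {k : ℤ} (hk : k ≤ 0) : distNonposOrSquare k = 0 :=
  Metric.infDist_zero_of_mem (Or.inl hk)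

theorem distNonposOrSquare_sq (j : ℕ) : distNonposOrSquare ((j : ℤ) ^ 2) = 0 :=
  Metric.infDist_zero_of_mem (Or.inr ⟨j, rfl⟩)

theorem le_distNonposOrSquare_sq_add_self (j : ℕ) :
    (j : ℝ) ≤ distNonposOrSquare ((j : ℤ) ^ 2 + j) := by
  unfold distNonposOrSquare
  refine (Metric.le_infDist Set.nonempty_Iic.inl).2 ?_
  rintro y (hy | ⟨i, rfl⟩) <;> rw [Int.dist_eq, le_abs] <;> push_cast
  · have : (y : ℝ) ≤ 0 := by exact_mod_cast hy
    left
    nlinarith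
  · rcases le_or_gt i j with h | h
    · have : (i : ℝ) ^ 2 ≤ (j : ℝ) ^ 2 := by gcongr
      left
      linarith
    · have : ((j : ℝ) + 1) ^ 2 ≤ (i : ℝ) ^ 2 := by gcongr; exact_mod_cast h
      right
      nlinarith

abbrev squareShift : ℓ²(ℤ, ℂ) ≃L[ℂ] ℓ²(ℤ, ℂ) :=
  weightedShift ℂ 2 distNonposOrSquare 1 lipschitzWith_distNonposOrSquare

theorem enorm_squareShift_iterate_single (n : ℕ) :
    ‖squareShift^[n] (lp.single 2 0 1)‖ₑ = ENNReal.ofReal (Real.exp (-distNonposOrSquare n)) := by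
  rw [← ofReal_norm, norm_weightedShift_iterate_single, distNonposOrSquare_of_nonpos le_rfl]
  simp

theorem liYorkeChaotic_squareShift : LiYorkeChaotic squareShift := by
  set f : ℕ → ℝ≥0∞ := fun n => ‖squareShift^[n] (lp.single 2 0 1)‖ₑ with hf
  have hsup : 0 < limsup f atTop := by
    refine zero_lt_one.trans_le (le_limsup_of_frequently_le ?_)
    refine frequently_atTop.2 fun N => ⟨N ^ 2, Nat.le_self_pow two_ne_zero N, ?_⟩
    simp [hf, enorm_squareShift_iterate_single, distNonposOrSquare_sq]
  have hinf : liminf f atTop = 0 := by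
    have hφ : Tendsto (fun j : ℕ => j ^ 2 + j) atTop atTop :=
      tendsto_atTop_mono (fun j => Nat.le_add_left j _) tendsto_id
    have hlim : Tendsto (fun j : ℕ => ENNReal.ofReal (Real.exp (-j))) atTop (𝓝 0) := by
      simpa using ENNReal.tendsto_ofReal
        (Real.tendsto_exp_neg_atTop_nhds_zero.comp tendsto_natCast_atTop_atTop)
    have hcomp : Tendsto (f ∘ fun j : ℕ => j ^ 2 + j) atTop (𝓝 0) :=
      tendsto_of_tendsto_of_tendsto_of_le_of_le tendsto_const_nhds hlim (fun _ => zero_le)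
        fun j => by
          simp only [Function.comp_apply, hf, enorm_squareShift_iterate_single]
          gcongr
          exact_mod_cast le_distNonposOrSquare_sq_add_self j
    exact le_antisymm (hcomp.liminf_eq ▸ hφ.liminf_le_liminf_comp) zero_le
  exact (squareShift.toLinearEquiv.toLinearMap.restrictScalars ℝ)
    |>.liYorkeChaotic_of_limsup_pos_of_liminf_eq_zero _ hsup hinf

theorem not_liYorkeChaotic_squareShift_symm : ¬ LiYorkeChaotic squareShift.symm := by
  refine squareShift.symm.toLinearEquiv.toLinearMap.not_liYorkeChaotic_of_liminf_ne_zero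
    fun v hv => ?_
  obtain ⟨m, hm⟩ : ∃ m, v m ≠ 0 := by
    by_contra! h
    exact hv (lp.ext (funext h))
  have hev : ∀ᶠ n : ℕ in atTop, ENNReal.ofReal ‖v m‖ ≤ ‖squareShift.symm^[n] v‖ₑ := by
    filter_upwards [eventually_ge_atTop m.toNat] with n hn
    rw [← ofReal_norm]
    refine ENNReal.ofReal_le_ofReal (le_trans ?_
      (exp_mul_norm_apply_le_norm_weightedShift_symm_iterate _ _ _ n v m))
    rw [distNonposOrSquare_of_nonpos (k := m - n) (by omega), sub_zero]
    exact le_mul_of_one_le_left (norm_nonneg _) (Real.one_le_exp (distNonposOrSquare_nonneg m))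
  exact ((ENNReal.ofReal_pos.2 (norm_pos_iff.2 hm)).trans_le
    (le_liminf_of_le (by isBoundedDefault) hev)).ne'

end

theorem stmt_0 :
    ∃ (H : Type) (_ : NormedAddCommGroup H) (_ : InnerProductSpace ℂ H),
      CompleteSpace H ∧ TopologicalSpace.SeparableSpace H ∧ ¬ FiniteDimensional ℂ H ∧
        ∃ T : H ≃L[ℂ] H, LiYorkeChaotic (⇑T) ∧ ¬ LiYorkeChaotic (⇑T.symm) :=
  ⟨ℓ²(ℤ, ℂ), inferInstance, inferInstance, inferInstance,
    (default : HilbertBasis ℤ ℂ ℓ²(ℤ, ℂ)).separableSpace,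
    (default : HilbertBasis ℤ ℂ ℓ²(ℤ, ℂ)).not_finiteDimensional,
    squareShift, liYorkeChaotic_squareShift, not_liYorkeChaotic_squareShift_symm⟩
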